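/- Let ε ∼ N(0,1), μ̄ ∈ ℝ, σ̄ > 0, and let φ_b(x) = max(0, x−b) − max(0, −x−b) for b ≥ 0. Then the derivative with respect to b of E[φ_b(μ̄ + σ̄ε)] equals Φ((b−μ̄)/σ̄) − Φ((μ̄+b)/σ̄). -/

import Mathlib

open MeasureTheory ProbabilityTheory

/-- Soft-thresholding (LSA) activation `φ_b(x) = max(0, x-b) - max(0, -x-b)`. -/
noncomputable def lsa (b x : ℝ) : ℝ := max 0 (x - b) - max 0 (-x - b)

/-- Standard normal CDF. -/
noncomputable def stdNormalCDF (t : ℝ) : ℝ := (gaussianReal 0 1 (Set.Iic t)).toReal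

/-!
For every `y`, `b ↦ φ_b(y)` is `2`-Lipschitz and, away from `b = ±y`, has derivative
`𝟙{y < -b} - 𝟙{y > b}`. Differentiating under the integral sign (dominated by the constant `2`)
shows that `b ↦ E[φ_b(Y)]` has derivative `P(Y < -b) - P(Y > b)` for any integrable `Y` without
atoms at `±b`. For `Y = μ̄ + σ̄ε` these are `1 - Φ((μ̄+b)/σ̄)` (by the symmetry `ε ↦ -ε`) and
`1 - Φ((b-μ̄)/σ̄)`.
-/

open Filter Set

lemma hasDerivAt_max_zero_sub {b c : ℝ} (h : b ≠ c) :
    HasDerivAt (fun b' => max 0 (c - b')) (-(Ioi b).indicator 1 c) b := by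
  rcases h.lt_or_gt with hbc | hcb
  · rw [indicator_of_mem (mem_Ioi.2 hbc)]
    refine ((hasDerivAt_id b).const_sub c).congr_of_eventuallyEq ?_
    filter_upwards [eventually_lt_nhds hbc] with b' hb'
    exact max_eq_right (by linarith)
  · rw [indicator_of_notMem (notMem_Ioi.2 hcb.le), neg_zero]
    refine (hasDerivAt_const b 0).congr_of_eventuallyEq ?_
    filter_upwards [eventually_gt_nhds hcb] with b' hb'
    exact max_eq_left (by linarith)

lemma lipschitzWith_max_zero_sub (c : ℝ) : LipschitzWith 1 (fun b : ℝ => max 0 (c - b)) := by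
  simpa using ((LipschitzWith.const c).sub LipschitzWith.id).const_max 0

lemma lipschitzWith_lsa (y : ℝ) : LipschitzWith 2 (fun b => lsa b y) := by
  have h := (lipschitzWith_max_zero_sub y).sub (lipschitzWith_max_zero_sub (-y))
  rwa [one_add_one_eq_two] at h

lemma hasDerivAt_lsa {b y : ℝ} (h₁ : b ≠ y) (h₂ : b ≠ -y) :
    HasDerivAt (fun b' => lsa b' y) ((Iio (-b)).indicator 1 y - (Ioi b).indicator 1 y) b := by
  have h : HasDerivAt (fun b' => lsa b' y)
      (-(Ioi b).indicator 1 y - -(Ioi b).indicator 1 (-y)) b :=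
    (hasDerivAt_max_zero_sub h₁).sub (hasDerivAt_max_zero_sub h₂)
  convert h using 1
  simp only [indicator_apply, mem_Iio, mem_Ioi, lt_neg, Pi.one_apply]
  ring

lemma continuous_lsa (b : ℝ) : Continuous (lsa b) := by
  unfold lsa
  fun_prop

section

variable {Ω : Type*} [MeasurableSpace Ω] {P : Measure Ω} [IsFiniteMeasure P] {Y : Ω → ℝ}

lemma integrable_lsa_comp (hY : Integrable Y P) (b : ℝ) : Integrable (fun ω => lsa b (Y ω)) P :=
  ((integrable_const 0).sup (hY.sub (integrable_const b))).sub
    ((integrable_const 0).sup (hY.neg.sub (integrable_const b)))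

theorem hasDerivAt_integral_lsa (hY : Integrable Y P) {b : ℝ} (hb₁ : P {ω | Y ω = b} = 0)
    (hb₂ : P {ω | Y ω = -b} = 0) :
    HasDerivAt (fun b' => ∫ ω, lsa b' (Y ω) ∂P)
      (P.real {ω | Y ω < -b} - P.real {ω | b < Y ω}) b := by
  have hYm := hY.aemeasurable
  have hlt : NullMeasurableSet {ω | Y ω < -b} P := nullMeasurableSet_lt hYm aemeasurable_const
  have hgt : NullMeasurableSet {ω | b < Y ω} P := nullMeasurableSet_lt aemeasurable_const hYm
  have hdiff : ∀ᵐ ω ∂P, b ≠ Y ω ∧ b ≠ -Y ω := by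
    have h₁ : ∀ᵐ ω ∂P, Y ω ≠ b := ae_iff.2 (by simpa using hb₁)
    have h₂ : ∀ᵐ ω ∂P, Y ω ≠ -b := ae_iff.2 (by simpa using hb₂)
    filter_upwards [h₁, h₂] with ω hω₁ hω₂
    exact ⟨hω₁.symm, fun h => hω₂ (by linarith)⟩
  obtain ⟨-, h⟩ := hasDerivAt_integral_of_dominated_loc_of_lip (bound := fun _ => 2)
    (F' := fun ω => {ω | Y ω < -b}.indicator 1 ω - {ω | b < Y ω}.indicator 1 ω) univ_mem
    (.of_forall fun b' => (continuous_lsa b').comp_aestronglyMeasurable hY.1)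
    (integrable_lsa_comp hY b)
    ((aestronglyMeasurable_const.indicator₀ hlt).sub (aestronglyMeasurable_const.indicator₀ hgt))
    (.of_forall fun y => by simpa using lipschitzWith_lsa (Y y))
    (integrable_const 2)
    (hdiff.mono fun ω hω => hasDerivAt_lsa hω.1 hω.2)
  rwa [integral_sub ((integrable_const 1).indicator₀ hlt) ((integrable_const 1).indicator₀ hgt),
    integral_indicator₀ hlt, integral_indicator₀ hgt, Pi.one_def, setIntegral_const,
    setIntegral_const, smul_eq_mul, smul_eq_mul, mul_one, mul_one] at h

end

lemma gaussianReal_real_Ioi (t : ℝ) : (gaussianReal 0 1).real (Ioi t) = 1 - stdNormalCDF t := by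
  rw [← compl_Iic, measureReal_compl measurableSet_Iic, probReal_univ, stdNormalCDF,
    measureReal_def]

lemma gaussianReal_real_Iio_neg (t : ℝ) :
    (gaussianReal 0 1).real (Iio (-t)) = 1 - stdNormalCDF t := by
  have h : (gaussianReal 0 1).map (fun x => -x) = gaussianReal 0 1 := by
    simpa using gaussianReal_map_neg (μ := 0) (v := 1)
  calc (gaussianReal 0 1).real (Iio (-t))
      = ((gaussianReal 0 1).map (fun x => -x)).real (Iio (-t)) := by rw [h]
    _ = (gaussianReal 0 1).real (Ioi t) := by
      rw [map_measureReal_apply measurable_neg measurableSet_Iio, neg_preimage, neg_Iio, neg_neg]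
    _ = 1 - stdNormalCDF t := gaussianReal_real_Ioi t

theorem lsa_expectation_deriv_general (μ σ : ℝ) (hσ : 0 < σ) (b : ℝ) :
    HasDerivAt (fun b' => ∫ x, lsa b' (μ + σ * x) ∂(gaussianReal 0 1))
      (stdNormalCDF ((b - μ) / σ) - stdNormalCDF ((μ + b) / σ)) b := by
  have := nullSingletonClass_gaussianReal (μ := 0) one_ne_zero
  have hinj : Function.Injective (fun x : ℝ => μ + σ * x) := fun x y h => by
    simpa [hσ.ne'] using h
  have hlevel (c : ℝ) : gaussianReal 0 1 {x | μ + σ * x = c} = 0 :=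
    (subsingleton_singleton.preimage hinj).measure_zero _
  have hint : Integrable (fun x => μ + σ * x) (gaussianReal 0 1) :=
    (integrable_const μ).add (((memLp_id_gaussianReal 1).integrable le_rfl).const_mul σ)
  have hlt : {x | μ + σ * x < -b} = Iio (-((μ + b) / σ)) := by
    ext x
    simp only [mem_ofPred_eq, mem_Iio, ← neg_div, lt_div_iff₀ hσ]
    constructor <;> intro h <;> linarith
  have hgt : {x | b < μ + σ * x} = Ioi ((b - μ) / σ) := by
    ext x
    simp only [mem_ofPred_eq, mem_Ioi, div_lt_iff₀ hσ]
    constructor <;> intro h <;> linarith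
  convert hasDerivAt_integral_lsa hint (hlevel b) (hlevel (-b)) using 1
  rw [hlt, hgt, gaussianReal_real_Iio_neg, gaussianReal_real_Ioi]
  ring

/-- the derivative in `b` of `E[φ_b(μ̄ + σ̄ ε)]`, `ε ∼ N(0,1)`, equals
`Φ((b-μ̄)/σ̄) - Φ((μ̄+b)/σ̄)`. -/
theorem lsa_expectation_deriv (μ σ : ℝ) (hσ : 0 < σ) (b : ℝ) (hb : 0 ≤ b) :
    HasDerivAt (fun b' => ∫ x, lsa b' (μ + σ * x) ∂(gaussianReal 0 1))
      (stdNormalCDF ((b - μ) / σ) - stdNormalCDF ((μ + b) / σ)) b :=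
  lsa_expectation_deriv_general μ σ hσ b
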